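/- arXiv:2503.21563 — 4 statements merged into one kernel-verified Lean document; each statement's English description precedes it below -/
import Mathlib

section
/- Let k ≥ 2 and let A_1 ∈ ℝ^{m_1×n}, …, A_k ∈ ℝ^{m_k×n}. Suppose the unit vector v* ∈ ℝ^n minimizes v ↦ max_{1≤i≤k} h_i(v) over the unit sphere, and let z* = max_{1≤i≤k} h_i(v*). Then there exist distinct indices i ≠ j such that z* = h_i(v*) = h_j(v*), and z* ≥ h_l(v*) for every l ∉ {i, j}. -/
open Matrix

/-- The largest eigenvalue of a real symmetric matrix, via its Rayleigh-quotient
characterization: `λmax(M) = sup { vᵀ M v : ‖v‖ = 1 }`. -/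
noncomputable def lamMax {n : ℕ} (M : Matrix (Fin n) (Fin n) ℝ) : ℝ :=
  sSup {r : ℝ | ∃ v : Fin n → ℝ, v ⬝ᵥ v = 1 ∧ r = v ⬝ᵥ (M *ᵥ v)}

/-- The rank-1 fair loss `h_M(v) = λmax(MᵀM) − vᵀ(MᵀM)v`. -/
noncomputable def fairLoss {m n : ℕ} (M : Matrix (Fin m) (Fin n) ℝ) (v : Fin n → ℝ) : ℝ :=
  lamMax (Mᵀ * M) - v ⬝ᵥ ((Mᵀ * M) *ᵥ v)

lemma rayleigh_bddAbove {n : ℕ} (S : Matrix (Fin n) (Fin n) ℝ) :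
    BddAbove {r : ℝ | ∃ v : Fin n → ℝ, v ⬝ᵥ v = 1 ∧ r = v ⬝ᵥ (S *ᵥ v)} := by
  refine ⟨∑ i, ∑ j, |S i j|, ?_⟩
  rintro r ⟨v, hv, rfl⟩
  have hvi : ∀ i, |v i| ≤ 1 := by
    intro i
    rw [abs_le_one_iff_mul_self_le_one]
    calc v i * v i ≤ ∑ j, v j * v j :=
          Finset.single_le_sum (fun j _ => mul_self_nonneg (v j)) (Finset.mem_univ i)
      _ = 1 := hv
  have h : v ⬝ᵥ (S *ᵥ v) = ∑ i, ∑ j, v i * (S i j * v j) := by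
    simp [dotProduct, mulVec, Finset.mul_sum]
  rw [h]
  refine Finset.sum_le_sum fun i _ => Finset.sum_le_sum fun j _ => ?_
  calc v i * (S i j * v j) ≤ |v i * (S i j * v j)| := le_abs_self _
    _ = |v i| * |S i j| * |v j| := by rw [abs_mul, abs_mul]; ring
    _ ≤ 1 * |S i j| * 1 := by
        apply mul_le_mul (mul_le_mul (hvi i) le_rfl (abs_nonneg _)
          (by linarith [hvi i, abs_nonneg (v i)])) (hvi j) (abs_nonneg _)
        positivity
    _ = |S i j| := by ring

lemma fairLoss_nonneg {m n : ℕ} (M : Matrix (Fin m) (Fin n) ℝ) (v : Fin n → ℝ)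
    (hv : v ⬝ᵥ v = 1) : 0 ≤ fairLoss M v :=
  sub_nonneg.2 (le_csSup (rayleigh_bddAbove _) ⟨v, hv, rfl⟩)

lemma symm_dot {n : ℕ} {S : Matrix (Fin n) (Fin n) ℝ} (hS : Sᵀ = S) (x y : Fin n → ℝ) :
    x ⬝ᵥ (S *ᵥ y) = y ⬝ᵥ (S *ᵥ x) := by
  rw [dotProduct_mulVec, ← vecMul_transpose, hS, dotProduct_comm]

/-- if the unit vector `v*` minimizes `v ↦ maxᵢ hᵢ(v)` over the unit
sphere and `z* = maxᵢ hᵢ(v*)`, then there are distinct indices `i ≠ j` with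
`z* = hᵢ(v*) = hⱼ(v*)` and `z* ≥ h_l(v*)` for all `l ∉ {i,j}`. -/
theorem stmt1 {n k : ℕ} (hk : 2 ≤ k) {m : Fin k → ℕ}
    (A : ∀ i : Fin k, Matrix (Fin (m i)) (Fin n) ℝ)
    (vstar : Fin n → ℝ) (hv : vstar ⬝ᵥ vstar = 1)
    (hmin : ∀ u : Fin n → ℝ, u ⬝ᵥ u = 1 →
      (⨆ i : Fin k, fairLoss (A i) vstar) ≤ ⨆ i : Fin k, fairLoss (A i) u)
    (zstar : ℝ) (hz : zstar = ⨆ i : Fin k, fairLoss (A i) vstar) :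
    ∃ i j : Fin k, i ≠ j ∧ zstar = fairLoss (A i) vstar ∧ zstar = fairLoss (A j) vstar ∧
      ∀ l : Fin k, l ≠ i → l ≠ j → fairLoss (A l) vstar ≤ zstar := by
  haveI : Nontrivial (Fin k) := Fin.nontrivial_iff_two_le.mpr hk
  obtain ⟨i, hi⟩ := Finite.exists_max (fun l : Fin k => fairLoss (A l) vstar)
  have hzi : zstar = fairLoss (A i) vstar := by
    rw [hz]
    exact le_antisymm (ciSup_le hi)
      (le_ciSup (f := fun l : Fin k => fairLoss (A l) vstar)
        (Set.Finite.bddAbove (Set.finite_range _)) i)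
  by_cases hex : ∃ j, j ≠ i ∧ fairLoss (A j) vstar = fairLoss (A i) vstar
  · obtain ⟨j, hji, hj⟩ := hex
    exact ⟨i, j, Ne.symm hji, hzi, by rw [hzi, hj], fun l _ _ => by rw [hzi]; exact hi l⟩
  · push_neg at hex
    exfalso
    have hlt : ∀ l, l ≠ i → fairLoss (A l) vstar < zstar := fun l hl => by
      rw [hzi]; exact lt_of_le_of_ne (hi l) (hex l hl)
    obtain ⟨j, hji⟩ := exists_ne i
    have hzpos : 0 < zstar := lt_of_le_of_lt (fairLoss_nonneg _ _ hv) (hlt j hji)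
    set Sl : ∀ l : Fin k, Matrix (Fin n) (Fin n) ℝ := fun l => (A l)ᵀ * (A l) with hSldef
    have hSl : ∀ l, (Sl l)ᵀ = Sl l := fun l => by
      rw [hSldef]; simp [transpose_mul]
    set q : ℝ := vstar ⬝ᵥ (Sl i *ᵥ vstar) with hqdef
    have hq : zstar = lamMax (Sl i) - q := hzi
    have hqlt : q < lamMax (Sl i) := by linarith
    have hmem : q ∈ {r : ℝ | ∃ v : Fin n → ℝ, v ⬝ᵥ v = 1 ∧ r = v ⬝ᵥ (Sl i *ᵥ v)} :=
      ⟨vstar, hv, hqdef⟩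
    rw [lamMax] at hqlt
    obtain ⟨x, ⟨w, hw1, rfl⟩, hwq⟩ :=
      exists_lt_of_lt_csSup (Set.nonempty_of_mem hmem) hqlt
    rw [← lamMax] at hqlt
    set c : ℝ := w ⬝ᵥ vstar with hcdef
    have hc2 : c ^ 2 ≤ 1 := by
      have h0 : 0 ≤ (vstar - c • w) ⬝ᵥ (vstar - c • w) :=
        Finset.sum_nonneg fun _ _ => mul_self_nonneg _
      have hexp : (vstar - c • w) ⬝ᵥ (vstar - c • w) = 1 - c ^ 2 := by
        simp [dotProduct_sub, sub_dotProduct, dotProduct_smul, smul_dotProduct,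
          smul_eq_mul, hv, hw1, dotProduct_comm vstar w, ← hcdef]
        ring
      linarith [hexp ▸ h0]
    set ql : Fin k → ℝ := fun l => vstar ⬝ᵥ (Sl l *ᵥ vstar) with hqldef
    set bl : Fin k → ℝ := fun l => w ⬝ᵥ (Sl l *ᵥ vstar) with hbldef
    set el : Fin k → ℝ := fun l => w ⬝ᵥ (Sl l *ᵥ w) with heldef
    set D : ℝ → ℝ := fun t => 1 + 2 * c * t + t ^ 2 with hDdef
    have hexpand : ∀ (l : Fin k) (t : ℝ),
        (vstar + t • w) ⬝ᵥ (Sl l *ᵥ (vstar + t • w)) = ql l + 2 * bl l * t + el l * t ^ 2 := by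
      intro l t
      have h1 : (vstar + t • w) ⬝ᵥ (Sl l *ᵥ (vstar + t • w)) =
          vstar ⬝ᵥ (Sl l *ᵥ vstar) + t * (vstar ⬝ᵥ (Sl l *ᵥ w)) +
          t * (w ⬝ᵥ (Sl l *ᵥ vstar)) + t * t * (w ⬝ᵥ (Sl l *ᵥ w)) := by
        simp [dotProduct_add, add_dotProduct, mulVec_add, mulVec_smul,
          dotProduct_smul, smul_dotProduct, smul_eq_mul]
        ring
      rw [h1, symm_dot (hSl l) vstar w, hqldef, hbldef, heldef]
      ring
    have hdot : ∀ t : ℝ, (vstar + t • w) ⬝ᵥ (vstar + t • w) = D t := by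
      intro t
      simp [dotProduct_add, add_dotProduct, dotProduct_smul, smul_dotProduct,
        smul_eq_mul, hv, hw1, dotProduct_comm vstar w, ← hcdef, hDdef]
      ring
    set g : Fin k → ℝ → ℝ :=
      fun l t => lamMax (Sl l) - (ql l + 2 * bl l * t + el l * t ^ 2) / D t with hgdef
    have hg0 : ∀ l, g l 0 = fairLoss (A l) vstar := by
      intro l
      rw [hgdef]
      simp [hDdef, hqldef, fairLoss, hSldef]
    have hev : ∀ᶠ t in nhds (0 : ℝ), ∀ l, l ≠ i → g l t < zstar := by
      rw [Filter.eventually_all]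
      intro l
      by_cases hl : l = i
      · exact Filter.Eventually.of_forall fun t h => absurd hl h
      · have hcont : ContinuousAt (g l) 0 := by
          rw [hgdef]
          apply ContinuousAt.sub continuousAt_const
          apply ContinuousAt.div (by fun_prop) (by rw [hDdef]; fun_prop)
          rw [hDdef]; norm_num
        have := hcont.eventually_lt continuousAt_const (by rw [hg0]; exact hlt l hl)
        exact this.mono fun t ht _ => ht
    rw [Metric.eventually_nhds_iff] at hev
    obtain ⟨ε, hε, hevs⟩ := hev
    set s : ℝ := if 0 ≤ bl i - c * q then 1 else -1 with hsdef
    set t0 : ℝ := s * min (ε / 2) 2⁻¹ with ht0def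
    have hm0 : 0 < min (ε / 2) 2⁻¹ := lt_min (by linarith) (by norm_num)
    have habs : |t0| = min (ε / 2) 2⁻¹ := by
      rw [ht0def, abs_mul, abs_of_pos hm0, hsdef]
      split <;> simp
    have habs1 : |t0| < 1 := by
      rw [habs]; exact lt_of_le_of_lt (min_le_right _ _) (by norm_num)
    have habse : |t0| < ε := by
      rw [habs]; exact lt_of_le_of_lt (min_le_left _ _) (by linarith)
    have ht0ne : t0 ≠ 0 := by
      intro h; rw [h, abs_zero] at habs; linarith
    have hsign : 0 ≤ t0 * (bl i - c * q) := by
      rw [ht0def, hsdef]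
      split_ifs with h
      · simp only [one_mul]; exact mul_nonneg hm0.le h
      · push_neg at h
        have : (-1 : ℝ) * min (ε / 2) 2⁻¹ * (bl i - c * q)
            = min (ε / 2) 2⁻¹ * (c * q - bl i) := by ring
        rw [this]
        exact mul_nonneg hm0.le (by linarith)
    have hD0 : 0 < D t0 := by
      have ht2 : t0 ^ 2 < 1 := by
        rw [← sq_abs]; nlinarith [abs_nonneg t0]
      show (0:ℝ) < 1 + 2 * c * t0 + t0 ^ 2
      nlinarith [sq_nonneg (c * t0 + 1), mul_nonneg (sq_nonneg t0) (sub_nonneg.2 hc2)]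
    set u : Fin n → ℝ := (Real.sqrt (D t0))⁻¹ • (vstar + t0 • w) with hudef
    have hsq : Real.sqrt (D t0) * Real.sqrt (D t0) = D t0 := Real.mul_self_sqrt hD0.le
    have hsqne : Real.sqrt (D t0) ≠ 0 := by positivity
    have hu1 : u ⬝ᵥ u = 1 := by
      rw [hudef]
      rw [smul_dotProduct, dotProduct_smul, hdot, smul_eq_mul, smul_eq_mul,
        ← mul_assoc, ← mul_inv, hsq]
      exact inv_mul_cancel₀ (ne_of_gt hD0)
    have hul : ∀ l, fairLoss (A l) u = g l t0 := by
      intro l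
      have : u ⬝ᵥ (Sl l *ᵥ u) = (ql l + 2 * bl l * t0 + el l * t0 ^ 2) / D t0 := by
        rw [hudef, mulVec_smul, smul_dotProduct, dotProduct_smul, hexpand, smul_eq_mul,
          smul_eq_mul, ← mul_assoc, ← mul_inv, hsq, inv_mul_eq_div]
      show lamMax (Sl l) - u ⬝ᵥ (Sl l *ᵥ u) = g l t0
      rw [this]
    have key : g i t0 < zstar := by
      have hqi : ql i = q := rfl
      have hei : q < el i := hwq
      have hfrac : q < (ql i + 2 * bl i * t0 + el i * t0 ^ 2) / D t0 := by
        rw [lt_div_iff₀ hD0, hqi]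
        have hDt : D t0 = 1 + 2 * c * t0 + t0 ^ 2 := rfl
        rw [hDt]
        have ht2 : 0 < t0 ^ 2 := by positivity
        nlinarith [mul_pos ht2 (sub_pos.2 hei), hsign]
      have hgi : g i t0 = lamMax (Sl i) - (ql i + 2 * bl i * t0 + el i * t0 ^ 2) / D t0 := rfl
      rw [hgi]
      linarith
    have hmin' := hmin u hu1
    rw [← hz] at hmin'
    obtain ⟨l0, hl0⟩ := Finite.exists_max (fun l : Fin k => fairLoss (A l) u)
    have hsup : (⨆ l : Fin k, fairLoss (A l) u) ≤ fairLoss (A l0) u := ciSup_le hl0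
    have hfin : fairLoss (A l0) u < zstar := by
      rw [hul l0]
      by_cases hl0i : l0 = i
      · rw [hl0i]; exact key
      · exact hevs (by rwa [Real.dist_eq, sub_zero]) l0 hl0i
    linarith
end

section
/- Let k ≥ 2 and let A_1 ∈ ℝ^{m_1×n}, …, A_k ∈ ℝ^{m_k×n}. Let v ∈ ℝ^n be a unit vector and suppose there is an index i such that h_i(v) > 0 and h_i(v) > h_j(v) for every j ≠ i. Then v is not a minimizer of u ↦ max_{1≤j≤k} h_j(u) over the unit sphere: there exists a unit vector v' with max_{1≤j≤k} h_j(v') < max_{1≤j≤k} h_j(v). -/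
/-!
Let `w` be a unit top eigenvector of `A_iᵀA_i`, signed so that `⟨v, w⟩ ≥ 0`, and move `v`
towards it along `v_t = (v + t w)/‖v + t w‖`. Because `w` is an eigenvector for `λmax`, the
loss of group `i` is rescaled exactly: `h_i(v_t) = h_i(v)/‖v + t w‖²`, and `‖v + t w‖² > 1` for
`t > 0`, so `h_i` strictly decreases. Every other `h_j` is continuous in `t` and starts strictly
below `h_i(v)`, so for small `t > 0` all losses at `v_t` are below `h_i(v) = maxⱼ hⱼ(v)`.
-/

open Matrix

open Filter Topology

namespace Matrix.IsHermitian

variable {ι : Type*} [Fintype ι] {N : Matrix ι ι ℝ}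

theorem dotProduct_mulVec_le_of_eigenvalues_le [DecidableEq ι] (hN : N.IsHermitian) {μ : ℝ}
    (hμ : ∀ j, hN.eigenvalues j ≤ μ) (u : ι → ℝ) : u ⬝ᵥ (N *ᵥ u) ≤ μ * (u ⬝ᵥ u) := by
  have hpsd : (μ • 1 - N).PosSemidef := by
    refine posSemidef_iff_isHermitian_and_spectrum_nonneg.2 ⟨?_, ?_⟩
    · exact IsHermitian.sub (by simp [IsHermitian]) hN
    · rw [← Algebra.algebraMap_eq_smul_one, ← spectrum.singleton_sub_eq,
        hN.spectrum_real_eq_range_eigenvalues]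
      rintro _ ⟨_, rfl, _, ⟨j, rfl⟩, rfl⟩
      exact sub_nonneg.2 (hμ j)
  simpa [sub_mulVec, smul_mulVec] using hpsd.dotProduct_mulVec_nonneg u

theorem dotProduct_mulVec_add_smul (hN : N.IsHermitian) {μ : ℝ} {w : ι → ℝ}
    (hw : N *ᵥ w = μ • w) (v : ι → ℝ) (t : ℝ) :
    (v + t • w) ⬝ᵥ (N *ᵥ (v + t • w)) =
      v ⬝ᵥ (N *ᵥ v) + μ * (2 * t * (v ⬝ᵥ w) + t ^ 2 * (w ⬝ᵥ w)) := by
  have hsymm : w ⬝ᵥ (N *ᵥ v) = μ * (v ⬝ᵥ w) := by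
    rw [dotProduct_mulVec, ← mulVec_transpose, ← conjTranspose_eq_transpose_of_trivial, hN.eq, hw,
      smul_dotProduct, smul_eq_mul, dotProduct_comm]
  simp only [mulVec_add, mulVec_smul, hw, dotProduct_add, add_dotProduct, dotProduct_smul,
    smul_dotProduct, smul_eq_mul, hsymm]
  ring

end Matrix.IsHermitian

theorem exists_mulVec_eq_lamMax_smul {n : ℕ} [NeZero n] {N : Matrix (Fin n) (Fin n) ℝ}
    (hN : N.IsHermitian) : ∃ w, w ⬝ᵥ w = 1 ∧ N *ᵥ w = lamMax N • w := by
  obtain ⟨j, hj⟩ := Finite.exists_max hN.eigenvalues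
  set w := (hN.eigenvectorBasis j).ofLp
  have hw1 : w ⬝ᵥ w = 1 := by
    have := real_inner_self_eq_norm_sq (hN.eigenvectorBasis j)
    rwa [EuclideanSpace.inner_eq_star_dotProduct, hN.eigenvectorBasis.orthonormal.1 j, one_pow,
      star_trivial] at this
  have hwN := hN.mulVec_eigenvectorBasis j
  have hlam : lamMax N = hN.eigenvalues j := by
    refine IsGreatest.csSup_eq ⟨⟨w, hw1, ?_⟩, ?_⟩
    · rw [hwN, dotProduct_smul, hw1, smul_eq_mul, mul_one]
    · rintro _ ⟨u, hu, rfl⟩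
      simpa [hu] using hN.dotProduct_mulVec_le_of_eigenvalues_le hj u
  exact ⟨w, hw1, hlam ▸ hwN⟩

theorem exists_mulVec_eq_lamMax_smul_dotProduct_nonneg {n : ℕ} [NeZero n]
    {N : Matrix (Fin n) (Fin n) ℝ} (hN : N.IsHermitian) (v : Fin n → ℝ) :
    ∃ w, w ⬝ᵥ w = 1 ∧ N *ᵥ w = lamMax N • w ∧ 0 ≤ v ⬝ᵥ w := by
  obtain ⟨w, hw, hwN⟩ := exists_mulVec_eq_lamMax_smul hN
  rcases le_total 0 (v ⬝ᵥ w) with h | h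
  · exact ⟨w, hw, hwN, h⟩
  · exact ⟨-w, by simpa using hw, by simp [mulVec_neg, hwN], by simpa using h⟩

section UnitVectors

variable {ι : Type*} [Fintype ι]

noncomputable def normalizeVec (x : ι → ℝ) : ι → ℝ := (√(x ⬝ᵥ x))⁻¹ • x

theorem dotProduct_self_nonneg (x : ι → ℝ) : 0 ≤ x ⬝ᵥ x := by
  simpa using dotProduct_star_self_nonneg x

theorem dotProduct_mulVec_normalizeVec (N : Matrix ι ι ℝ) (x : ι → ℝ) :
    normalizeVec x ⬝ᵥ (N *ᵥ normalizeVec x) = x ⬝ᵥ (N *ᵥ x) / (x ⬝ᵥ x) := by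
  rw [normalizeVec, mulVec_smul, dotProduct_smul, smul_dotProduct, smul_eq_mul, smul_eq_mul,
    ← mul_assoc, ← mul_inv, Real.mul_self_sqrt (dotProduct_self_nonneg x), inv_mul_eq_div]

theorem normalizeVec_dotProduct_self {x : ι → ℝ} (hx : x ⬝ᵥ x ≠ 0) :
    normalizeVec x ⬝ᵥ normalizeVec x = 1 := by
  rw [normalizeVec, dotProduct_smul, smul_dotProduct, smul_eq_mul, smul_eq_mul, ← mul_assoc,
    ← mul_inv, Real.mul_self_sqrt (dotProduct_self_nonneg x), inv_mul_cancel₀ hx]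

theorem normalizeVec_eq_self {x : ι → ℝ} (hx : x ⬝ᵥ x = 1) : normalizeVec x = x := by
  simp [normalizeVec, hx]

theorem continuousAt_normalizeVec {x : ι → ℝ} (hx : x ⬝ᵥ x ≠ 0) : ContinuousAt normalizeVec x := by
  have hsqrt : √(x ⬝ᵥ x) ≠ 0 :=
    Real.sqrt_ne_zero'.2 ((dotProduct_self_nonneg x).lt_of_ne' hx)
  exact ((continuous_id.dotProduct continuous_id).sqrt.continuousAt.inv₀ hsqrt).smul
    continuousAt_id

theorem dotProduct_add_smul_self (v w : ι → ℝ) (t : ℝ) :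
    (v + t • w) ⬝ᵥ (v + t • w) = v ⬝ᵥ v + 2 * t * (v ⬝ᵥ w) + t ^ 2 * (w ⬝ᵥ w) := by
  simp only [dotProduct_add, add_dotProduct, dotProduct_smul, smul_dotProduct, smul_eq_mul,
    dotProduct_comm w v]
  ring

theorem one_lt_dotProduct_add_smul_self {v w : ι → ℝ}
    (hv : v ⬝ᵥ v = 1) (hw : w ⬝ᵥ w = 1) (hvw : 0 ≤ v ⬝ᵥ w) {t : ℝ} (ht : 0 < t) :
    1 < (v + t • w) ⬝ᵥ (v + t • w) := by
  rw [dotProduct_add_smul_self, hv, hw]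
  nlinarith

end UnitVectors

section fairLoss

variable {m n : ℕ} (M : Matrix (Fin m) (Fin n) ℝ)

theorem continuous_fairLoss : Continuous (fairLoss M) := by
  unfold fairLoss
  exact continuous_const.sub
    (continuous_id.dotProduct ((continuous_const (y := Mᵀ * M)).matrix_mulVec continuous_id))

theorem isHermitian_transpose_mul_self : (Mᵀ * M).IsHermitian := by
  simpa using isHermitian_conjTranspose_mul_self M

theorem fairLoss_normalizeVec_add_smul {v w : Fin n → ℝ} (hv : v ⬝ᵥ v = 1) (hw : w ⬝ᵥ w = 1)
    (hwM : (Mᵀ * M) *ᵥ w = lamMax (Mᵀ * M) • w) {t : ℝ} (hd : (v + t • w) ⬝ᵥ (v + t • w) ≠ 0) :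
    fairLoss M (normalizeVec (v + t • w)) = fairLoss M v / ((v + t • w) ⬝ᵥ (v + t • w)) := by
  rw [fairLoss, fairLoss, dotProduct_mulVec_normalizeVec,
    (isHermitian_transpose_mul_self M).dotProduct_mulVec_add_smul hwM, eq_div_iff hd,
    sub_mul, div_mul_cancel₀ _ hd, dotProduct_add_smul_self, hv, hw]
  ring

theorem fairLoss_normalizeVec_add_smul_lt {v w : Fin n → ℝ} (hv : v ⬝ᵥ v = 1) (hw : w ⬝ᵥ w = 1)
    (hwM : (Mᵀ * M) *ᵥ w = lamMax (Mᵀ * M) • w) (hvw : 0 ≤ v ⬝ᵥ w) {t : ℝ} (ht : 0 < t)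
    (hpos : 0 < fairLoss M v) :
    fairLoss M (normalizeVec (v + t • w)) < fairLoss M v := by
  have hd := one_lt_dotProduct_add_smul_self hv hw hvw ht
  rw [fairLoss_normalizeVec_add_smul M hv hw hwM (by positivity)]
  exact div_lt_self hpos hd

theorem tendsto_fairLoss_normalizeVec_add_smul {v : Fin n → ℝ} (hv : v ⬝ᵥ v = 1)
    (w : Fin n → ℝ) :
    Tendsto (fun t : ℝ ↦ fairLoss M (normalizeVec (v + t • w))) (𝓝 0) (𝓝 (fairLoss M v)) := by
  have hline : Tendsto (fun t : ℝ ↦ v + t • w) (𝓝 0) (𝓝 v) := by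
    simpa using tendsto_const_nhds.add ((tendsto_id (x := 𝓝 (0 : ℝ))).smul_const w)
  have := (continuous_fairLoss M).continuousAt.tendsto.comp
    ((continuousAt_normalizeVec (hv ▸ one_ne_zero)).tendsto.comp hline)
  rwa [normalizeVec_eq_self hv] at this

end fairLoss

theorem stmt2_general {n k : ℕ} {m : Fin k → ℕ}
    (A : ∀ i : Fin k, Matrix (Fin (m i)) (Fin n) ℝ)
    (v : Fin n → ℝ) (hv : v ⬝ᵥ v = 1)
    (i : Fin k) (hpos : 0 < fairLoss (A i) v)
    (hdom : ∀ j : Fin k, j ≠ i → fairLoss (A j) v < fairLoss (A i) v) :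
    ∃ v' : Fin n → ℝ, v' ⬝ᵥ v' = 1 ∧
      (⨆ j : Fin k, fairLoss (A j) v') < ⨆ j : Fin k, fairLoss (A j) v := by
  have : NeZero n := ⟨by rintro rfl; simp at hv⟩
  obtain ⟨w, hw, hwA, hvw⟩ :=
    exists_mulVec_eq_lamMax_smul_dotProduct_nonneg (isHermitian_transpose_mul_self (A i)) v
  have hnear : ∀ᶠ t in 𝓝[>] (0 : ℝ),
      ∀ j, fairLoss (A j) (normalizeVec (v + t • w)) < fairLoss (A i) v := by
    refine eventually_all.2 fun j ↦ ?_
    rcases eq_or_ne j i with rfl | hj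
    · filter_upwards [self_mem_nhdsWithin] with t ht
      exact fairLoss_normalizeVec_add_smul_lt (A j) hv hw hwA hvw ht hpos
    · exact ((tendsto_fairLoss_normalizeVec_add_smul (A j) hv w).mono_left
        nhdsWithin_le_nhds).eventually (gt_mem_nhds (hdom j hj))
  obtain ⟨t, hlt, ht⟩ := (hnear.and self_mem_nhdsWithin).exists
  refine ⟨_, normalizeVec_dotProduct_self
    (one_pos.trans (one_lt_dotProduct_add_smul_self hv hw hvw ht)).ne', ?_⟩
  have : Nonempty (Fin k) := ⟨i⟩
  obtain ⟨j, hj⟩ := exists_eq_ciSup_of_finite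
    (f := fun j ↦ fairLoss (A j) (normalizeVec (v + t • w)))
  rw [← hj]
  exact (hlt j).trans_le (le_ciSup (f := fun j ↦ fairLoss (A j) v) (Finite.bddAbove_range _) i)

/-- if a unit vector `v` has a strictly dominating group `i` with
`hᵢ(v) > 0` and `hᵢ(v) > hⱼ(v)` for all `j ≠ i`, then `v` is not a minimizer of
`u ↦ maxⱼ hⱼ(u)` over the unit sphere. -/
theorem stmt2 {n k : ℕ} (hk : 2 ≤ k) {m : Fin k → ℕ}
    (A : ∀ i : Fin k, Matrix (Fin (m i)) (Fin n) ℝ)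
    (v : Fin n → ℝ) (hv : v ⬝ᵥ v = 1)
    (i : Fin k) (hpos : 0 < fairLoss (A i) v)
    (hdom : ∀ j : Fin k, j ≠ i → fairLoss (A j) v < fairLoss (A i) v) :
    ∃ v' : Fin n → ℝ, v' ⬝ᵥ v' = 1 ∧
      (⨆ j : Fin k, fairLoss (A j) v') < ⨆ j : Fin k, fairLoss (A j) v :=
  stmt2_general A v hv i hpos hdom
end

section
/- Let k = 2 with group matrices A ∈ ℝ^{a×n} and B ∈ ℝ^{b×n}, and set C(μ) = μ AᵀA + (1−μ) BᵀB for μ ∈ [0,1], s_1 = λmax(AᵀA), s_2 = λmax(BᵀB). Assume that for every μ ∈ [0,1] the largest eigenvalue of C(μ) is simple. Then strong duality holds: min over unit vectors v ∈ ℝ^n of max(h_A(v), h_B(v)) equals max over μ ∈ [0,1] of g(μ) = μ s_1 + (1−μ) s_2 − λmax(C(μ)), and both optima are attained. -/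
/-!
The dual objective `g` is concave, since `t ↦ λmax(C(t))` is a supremum of affine functions, so
it attains its maximum on `[0,1]` at some `μ`. Weak duality is the Rayleigh bound
`g(μ) ≤ μ h_A(v) + (1-μ) h_B(v) ≤ max (h_A v) (h_B v)` for every unit `v`, with equality in the
first step when `v = w` is a unit top eigenvector of `C(μ)`. Comparing `g(t) ≤ g(μ)` at top
eigenvectors of `C(t)` gives `(t - μ) (h_A - h_B) ≤ 0` there; letting `t → μ` from the right
(resp. left), these eigenvectors accumulate at a unit top eigenvector of `C(μ)`, which by
simplicity is `±w`. Hence `h_A(w) ≤ h_B(w)` if `μ < 1` and `h_B(w) ≤ h_A(w)` if `0 < μ`, so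
`max (h_A w) (h_B w)` equals the convex combination `g(μ)`.
-/

open Matrix

/-- `C(μ) = μ AᵀA + (1−μ) BᵀB`. -/
noncomputable def Cmat {a b n : ℕ} (A : Matrix (Fin a) (Fin n) ℝ)
    (B : Matrix (Fin b) (Fin n) ℝ) (t : ℝ) : Matrix (Fin n) (Fin n) ℝ :=
  t • (Aᵀ * A) + (1 - t) • (Bᵀ * B)

/-- The two-group dual objective `g(μ) = μ s₁ + (1−μ) s₂ − λmax(C(μ))`. -/
noncomputable def gdual {a b n : ℕ} (A : Matrix (Fin a) (Fin n) ℝ)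
    (B : Matrix (Fin b) (Fin n) ℝ) (t : ℝ) : ℝ :=
  t * lamMax (Aᵀ * A) + (1 - t) * lamMax (Bᵀ * B) - lamMax (Cmat A B t)

open Filter Topology Set

section TopEigenvector

variable {n : ℕ}

def IsUnitTopEigenvector (M : Matrix (Fin n) (Fin n) ℝ) (v : Fin n → ℝ) : Prop :=
  v ⬝ᵥ v = 1 ∧ M *ᵥ v = lamMax M • v

lemma IsUnitTopEigenvector.dotProduct_mulVec_eq {M : Matrix (Fin n) (Fin n) ℝ} {v : Fin n → ℝ}
    (hv : IsUnitTopEigenvector M v) : v ⬝ᵥ (M *ᵥ v) = lamMax M := by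
  rw [hv.2, dotProduct_smul, hv.1, smul_eq_mul, mul_one]

lemma isCompact_setOf_dotProduct_self_eq_one : IsCompact {v : Fin n → ℝ | v ⬝ᵥ v = 1} := by
  refine (isCompact_univ_pi fun _ => isCompact_Icc (a := (-1 : ℝ)) (b := 1)).of_isClosed_subset
    (isClosed_eq (by fun_prop) continuous_const) fun v hv i _ => ?_
  have hvi : v i * v i ≤ v ⬝ᵥ v :=
    Finset.single_le_sum (f := fun j => v j * v j) (fun j _ => mul_self_nonneg _) (Finset.mem_univ i)
  exact abs_le.1 (abs_le_one_iff_mul_self_le_one.2 (hvi.trans_eq hv))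

lemma continuous_dotProduct_mulVec (M : Matrix (Fin n) (Fin n) ℝ) :
    Continuous fun v : Fin n → ℝ => v ⬝ᵥ (M *ᵥ v) :=
  continuous_id.dotProduct (continuous_const.matrix_mulVec continuous_id)

lemma isCompact_rayleighSet (M : Matrix (Fin n) (Fin n) ℝ) :
    IsCompact {r : ℝ | ∃ v : Fin n → ℝ, v ⬝ᵥ v = 1 ∧ r = v ⬝ᵥ (M *ᵥ v)} := by
  convert isCompact_setOf_dotProduct_self_eq_one.image (continuous_dotProduct_mulVec M) using 1
  ext r
  simp [eq_comm]

lemma dotProduct_mulVec_le_lamMax (M : Matrix (Fin n) (Fin n) ℝ) {v : Fin n → ℝ}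
    (hv : v ⬝ᵥ v = 1) : v ⬝ᵥ (M *ᵥ v) ≤ lamMax M :=
  le_csSup (isCompact_rayleighSet M).bddAbove ⟨v, hv, rfl⟩

lemma dotProduct_mulVec_le_lamMax_mul (M : Matrix (Fin n) (Fin n) ℝ) (x : Fin n → ℝ) :
    x ⬝ᵥ (M *ᵥ x) ≤ lamMax M * (x ⬝ᵥ x) := by
  rcases eq_or_ne x 0 with rfl | hx
  · simp
  have hpos : 0 < x ⬝ᵥ x :=
    lt_of_le_of_ne (by simpa using dotProduct_self_star_nonneg x)
      (fun h => hx (dotProduct_self_eq_zero.1 h.symm))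
  set c := √(x ⬝ᵥ x)
  have hc : c * c = x ⬝ᵥ x := Real.mul_self_sqrt hpos.le
  have hc0 : 0 < c := Real.sqrt_pos.2 hpos
  have hunit : (c⁻¹ • x) ⬝ᵥ (c⁻¹ • x) = 1 := by
    simp only [smul_dotProduct, dotProduct_smul, smul_eq_mul, ← hc]
    field_simp
  have hle := dotProduct_mulVec_le_lamMax M hunit
  simp only [mulVec_smul, smul_dotProduct, dotProduct_smul, smul_eq_mul] at hle
  rw [← hc]
  calc x ⬝ᵥ (M *ᵥ x) = (c * c) * (c⁻¹ * (c⁻¹ * x ⬝ᵥ (M *ᵥ x))) := by field_simp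
    _ ≤ (c * c) * lamMax M := by gcongr
    _ = lamMax M * (c * c) := mul_comm _ _

lemma IsUnitTopEigenvector.eq_or_eq_neg {M : Matrix (Fin n) (Fin n) ℝ} {u w w₀ : Fin n → ℝ}
    (hu : IsUnitTopEigenvector M u) (hw : IsUnitTopEigenvector M w)
    (hsimple : ∀ x, M *ᵥ x = lamMax M • x → ∃ c : ℝ, x = c • w₀) : u = w ∨ u = -w := by
  obtain ⟨a, rfl⟩ := hsimple u hu.2
  obtain ⟨b, rfl⟩ := hsimple w hw.2
  have hb : b ≠ 0 := by rintro rfl; simpa using hw.1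
  have h0 : w₀ ⬝ᵥ w₀ ≠ 0 := by rintro h0; simpa [h0] using hw.1
  have haa : a * a = b * b := by
    have h := hu.1.trans hw.1.symm
    simp only [smul_dotProduct, dotProduct_smul, smul_eq_mul, ← mul_assoc] at h
    exact mul_right_cancel₀ h0 h
  have hab : (a / b) * (a / b) = 1 := by
    rw [div_mul_div_comm, haa, div_self (mul_ne_zero hb hb)]
  rcases mul_self_eq_one_iff.1 hab with h | h
  · left; rw [(div_eq_one_iff_eq hb).1 h]
  · right; rw [(div_eq_iff hb).1 h, neg_one_mul, neg_smul]

lemma exists_subseq_tendsto_isUnitTopEigenvector {M : ℝ → Matrix (Fin n) (Fin n) ℝ}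
    (hM : Continuous M) (hlam : Continuous fun t => lamMax (M t)) {t : ℕ → ℝ} {μ : ℝ}
    (ht : Tendsto t atTop (𝓝 μ)) {v : ℕ → Fin n → ℝ}
    (hv : ∀ k, IsUnitTopEigenvector (M (t k)) (v k)) :
    ∃ u, IsUnitTopEigenvector (M μ) u ∧
      ∃ ψ : ℕ → ℕ, StrictMono ψ ∧ Tendsto (v ∘ ψ) atTop (𝓝 u) := by
  obtain ⟨u, hu, ψ, hψ, hlim⟩ :=
    isCompact_setOf_dotProduct_self_eq_one.tendsto_subseq fun k => (hv k).1
  have htψ := ht.comp hψ.tendsto_atTop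
  have hMv : Tendsto (fun k => M (t (ψ k)) *ᵥ v (ψ k)) atTop (𝓝 (M μ *ᵥ u)) :=
    ((continuous_fst.matrix_mulVec continuous_snd).tendsto (M μ, u)).comp
      (((hM.tendsto μ).comp htψ).prodMk_nhds hlim)
  have hlamv : Tendsto (fun k => lamMax (M (t (ψ k))) • v (ψ k)) atTop
      (𝓝 (lamMax (M μ) • u)) :=
    ((hlam.tendsto μ).comp htψ).smul hlim
  exact ⟨u, ⟨hu, tendsto_nhds_unique (hMv.congr fun k => (hv (ψ k)).2) hlamv⟩, ψ, hψ, hlim⟩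

lemma posSemidef_lamMax_smul_one_sub {M : Matrix (Fin n) (Fin n) ℝ} (hM : M.IsHermitian) :
    (lamMax M • (1 : Matrix (Fin n) (Fin n) ℝ) - M).PosSemidef := by
  refine .of_dotProduct_mulVec_nonneg ((isHermitian_one.smul (IsSelfAdjoint.all _)).sub hM)
    fun x => ?_
  have := dotProduct_mulVec_le_lamMax_mul M x
  simp only [star_trivial, sub_mulVec, smul_mulVec, one_mulVec, dotProduct_sub, dotProduct_smul,
    smul_eq_mul]
  linarith

variable [NeZero n]

lemma exists_dotProduct_mulVec_eq_lamMax (M : Matrix (Fin n) (Fin n) ℝ) :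
    ∃ v : Fin n → ℝ, v ⬝ᵥ v = 1 ∧ v ⬝ᵥ (M *ᵥ v) = lamMax M := by
  obtain ⟨v, hv, hMv⟩ := (isCompact_rayleighSet M).sSup_mem ⟨_, Pi.single 0 1, by simp, rfl⟩
  exact ⟨v, hv, hMv.symm⟩

lemma lamMax_le {M : Matrix (Fin n) (Fin n) ℝ} {c : ℝ}
    (h : ∀ v : Fin n → ℝ, v ⬝ᵥ v = 1 → v ⬝ᵥ (M *ᵥ v) ≤ c) : lamMax M ≤ c := by
  obtain ⟨v, hv, hMv⟩ := exists_dotProduct_mulVec_eq_lamMax M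
  exact hMv ▸ h v hv

lemma convexOn_lamMax : ConvexOn ℝ univ (lamMax : Matrix (Fin n) (Fin n) ℝ → ℝ) := by
  refine ⟨convex_univ, fun M _ N _ p q hp hq _ => lamMax_le fun v hv => ?_⟩
  have hM := dotProduct_mulVec_le_lamMax M hv
  have hN := dotProduct_mulVec_le_lamMax N hv
  simp only [add_mulVec, smul_mulVec, dotProduct_add, dotProduct_smul, smul_eq_mul]
  gcongr

-- A unit maximizer of the Rayleigh quotient lies in the kernel of the PSD matrix `λmax • 1 - M`.
lemma exists_isUnitTopEigenvector {M : Matrix (Fin n) (Fin n) ℝ} (hM : M.IsHermitian) :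
    ∃ v, IsUnitTopEigenvector M v := by
  obtain ⟨v, hv, hMv⟩ := exists_dotProduct_mulVec_eq_lamMax M
  have hzero := ((posSemidef_lamMax_smul_one_sub hM).dotProduct_mulVec_zero_iff v).1 (by
    simp only [star_trivial, sub_mulVec, smul_mulVec, one_mulVec, dotProduct_sub, dotProduct_smul,
      smul_eq_mul, hv, hMv]
    ring)
  rw [sub_mulVec, smul_mulVec, one_mulVec, sub_eq_zero] at hzero
  exact ⟨v, hv, hzero.symm⟩

end TopEigenvector

lemma fairLoss_neg {m n : ℕ} (M : Matrix (Fin m) (Fin n) ℝ) (v : Fin n → ℝ) :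
    fairLoss M (-v) = fairLoss M v := by
  simp only [fairLoss, mulVec_neg, dotProduct_neg, neg_dotProduct, neg_neg]

lemma continuous_fairLoss_s6 {m n : ℕ} (M : Matrix (Fin m) (Fin n) ℝ) : Continuous (fairLoss M) :=
  continuous_const.sub (continuous_dotProduct_mulVec _)

lemma max_eq_mul_add_one_sub_mul {μ x y : ℝ} (hμ : μ ∈ Icc 0 1) (hxy : μ < 1 → x ≤ y)
    (hyx : 0 < μ → y ≤ x) : max x y = μ * x + (1 - μ) * y := by
  rcases hμ.1.eq_or_lt with rfl | h0
  · simp [hxy zero_lt_one]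
  rcases hμ.2.eq_or_lt with rfl | h1
  · simp [hyx h0]
  · rw [le_antisymm (hxy h1) (hyx h0), max_self]
    ring

section TwoGroups

variable {a b n : ℕ} (A : Matrix (Fin a) (Fin n) ℝ) (B : Matrix (Fin b) (Fin n) ℝ)

lemma isHermitian_Cmat (t : ℝ) : (Cmat A B t).IsHermitian := by
  have hA : (Aᵀ * A).IsHermitian := by simpa using isHermitian_conjTranspose_mul_self A
  have hB : (Bᵀ * B).IsHermitian := by simpa using isHermitian_conjTranspose_mul_self B
  exact (hA.smul (IsSelfAdjoint.all _)).add (hB.smul (IsSelfAdjoint.all _))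

lemma continuous_Cmat : Continuous (Cmat A B) := by
  unfold Cmat
  fun_prop

lemma Cmat_mul_add_mul_of_add_eq_one {p q : ℝ} (hpq : p + q = 1) (x y : ℝ) :
    Cmat A B (p * x + q * y) = p • Cmat A B x + q • Cmat A B y := by
  obtain rfl : q = 1 - p := by linarith
  ext i j
  simp only [Cmat, Matrix.add_apply, Matrix.smul_apply, smul_eq_mul]
  ring

lemma dotProduct_Cmat_mulVec (t : ℝ) (v : Fin n → ℝ) :
    v ⬝ᵥ (Cmat A B t *ᵥ v) = t * (v ⬝ᵥ ((Aᵀ * A) *ᵥ v)) + (1 - t) * (v ⬝ᵥ ((Bᵀ * B) *ᵥ v)) := by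
  simp only [Cmat, add_mulVec, smul_mulVec, dotProduct_add, dotProduct_smul, smul_eq_mul]

lemma gdual_le_mul_fairLoss_add (t : ℝ) {v : Fin n → ℝ} (hv : v ⬝ᵥ v = 1) :
    gdual A B t ≤ t * fairLoss A v + (1 - t) * fairLoss B v := by
  have := dotProduct_mulVec_le_lamMax (Cmat A B t) hv
  rw [dotProduct_Cmat_mulVec] at this
  simp only [gdual, fairLoss]
  linarith

lemma gdual_le_max_fairLoss {μ : ℝ} (hμ : μ ∈ Icc (0 : ℝ) 1) {v : Fin n → ℝ} (hv : v ⬝ᵥ v = 1) :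
    gdual A B μ ≤ max (fairLoss A v) (fairLoss B v) :=
  (gdual_le_mul_fairLoss_add A B μ hv).trans
    (Convex.combo_le_max _ _ hμ.1 (sub_nonneg.2 hμ.2) (add_sub_cancel _ _))

lemma IsUnitTopEigenvector.gdual_eq {t : ℝ} {v : Fin n → ℝ}
    (hv : IsUnitTopEigenvector (Cmat A B t) v) :
    gdual A B t = t * fairLoss A v + (1 - t) * fairLoss B v := by
  have := hv.dotProduct_mulVec_eq
  rw [dotProduct_Cmat_mulVec] at this
  simp only [gdual, fairLoss]
  linarith

variable {A B} in
lemma IsMaxOn.mul_fairLoss_sub_nonpos {μ : ℝ} (hμ : IsMaxOn (gdual A B) (Icc 0 1) μ) {t : ℝ}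
    (ht : t ∈ Icc (0 : ℝ) 1) {v : Fin n → ℝ} (hv : IsUnitTopEigenvector (Cmat A B t) v) :
    (t - μ) * (fairLoss A v - fairLoss B v) ≤ 0 := by
  have hgt := hv.gdual_eq
  have hgμ := gdual_le_mul_fairLoss_add A B μ hv.1
  have hmax : gdual A B t ≤ gdual A B μ := hμ ht
  linarith

variable [NeZero n]

lemma continuous_lamMax_Cmat : Continuous fun t => lamMax (Cmat A B t) := by
  have hconvex : ConvexOn ℝ univ fun t => lamMax (Cmat A B t) :=
    ⟨convex_univ, fun x _ y _ p q hp hq hpq => by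
      simpa only [smul_eq_mul, Cmat_mul_add_mul_of_add_eq_one A B hpq] using
        convexOn_lamMax.2 (mem_univ _) (mem_univ _) hp hq hpq⟩
  simpa [continuousOn_univ] using hconvex.continuousOn_interior

lemma continuous_gdual : Continuous (gdual A B) := by
  have := continuous_lamMax_Cmat A B
  unfold gdual
  fun_prop

variable {A B} {μ : ℝ}

lemma fairLoss_sub_mem_of_tendsto {w : Fin n → ℝ}
    (hsimple : ∀ u, IsUnitTopEigenvector (Cmat A B μ) u → u = w ∨ u = -w)
    {t : ℕ → ℝ} (ht : Tendsto t atTop (𝓝 μ)) {S : Set ℝ} (hS : IsClosed S)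
    (hmem : ∀ k v, IsUnitTopEigenvector (Cmat A B (t k)) v → fairLoss A v - fairLoss B v ∈ S) :
    fairLoss A w - fairLoss B w ∈ S := by
  choose v hv using fun k => exists_isUnitTopEigenvector (isHermitian_Cmat A B (t k))
  obtain ⟨u, hu, ψ, -, hlim⟩ :=
    exists_subseq_tendsto_isUnitTopEigenvector (continuous_Cmat A B) (continuous_lamMax_Cmat A B)
      ht hv
  have hu_mem : fairLoss A u - fairLoss B u ∈ S :=
    hS.mem_of_tendsto ((((continuous_fairLoss_s6 A).sub (continuous_fairLoss_s6 B)).tendsto u).comp hlim)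
      (Eventually.of_forall fun k => hmem _ _ (hv (ψ k)))
  rcases hsimple u hu with rfl | rfl
  · exact hu_mem
  · simpa only [fairLoss_neg] using hu_mem

lemma IsMaxOn.fairLoss_le_of_lt_one (hμ : IsMaxOn (gdual A B) (Icc 0 1) μ) (hμ₀ : 0 ≤ μ)
    (hμ₁ : μ < 1) {w : Fin n → ℝ}
    (hsimple : ∀ u, IsUnitTopEigenvector (Cmat A B μ) u → u = w ∨ u = -w) :
    fairLoss A w ≤ fairLoss B w := by
  obtain ⟨t, -, htμ, ht⟩ := exists_seq_strictAnti_tendsto' hμ₁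
  refine sub_nonpos.1 (fairLoss_sub_mem_of_tendsto hsimple ht isClosed_Iic fun k v hv => ?_)
  exact nonpos_of_mul_nonpos_right (hμ.mul_fairLoss_sub_nonpos
    ⟨hμ₀.trans (htμ k).1.le, (htμ k).2.le⟩ hv) (sub_pos.2 (htμ k).1)

lemma IsMaxOn.fairLoss_le_of_pos (hμ : IsMaxOn (gdual A B) (Icc 0 1) μ) (hμ₀ : 0 < μ)
    (hμ₁ : μ ≤ 1) {w : Fin n → ℝ}
    (hsimple : ∀ u, IsUnitTopEigenvector (Cmat A B μ) u → u = w ∨ u = -w) :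
    fairLoss B w ≤ fairLoss A w := by
  obtain ⟨t, -, htμ, ht⟩ := exists_seq_strictMono_tendsto' hμ₀
  refine sub_nonneg.1 (fairLoss_sub_mem_of_tendsto hsimple ht isClosed_Ici fun k v hv => ?_)
  exact nonneg_of_mul_nonpos_right (hμ.mul_fairLoss_sub_nonpos
    ⟨(htμ k).1.le, (htμ k).2.le.trans hμ₁⟩ hv) (sub_neg.2 (htμ k).2)

end TwoGroups

/-- strong duality for two groups: if for every `μ ∈ [0,1]` the
largest eigenvalue of `C(μ)` is simple (its eigenspace is one-dimensional), then
`min_{‖v‖=1} max(h_A(v), h_B(v)) = max_{μ ∈ [0,1]} g(μ)` and both optima are attained. -/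
theorem stmt6 {a b n : ℕ} (A : Matrix (Fin a) (Fin n) ℝ) (B : Matrix (Fin b) (Fin n) ℝ)
    (hsimple : ∀ μ ∈ Set.Icc (0 : ℝ) 1, ∃ w : Fin n → ℝ, w ≠ 0 ∧
      Cmat A B μ *ᵥ w = lamMax (Cmat A B μ) • w ∧
      ∀ u : Fin n → ℝ, Cmat A B μ *ᵥ u = lamMax (Cmat A B μ) • u → ∃ c : ℝ, u = c • w) :
    ∃ v : Fin n → ℝ, ∃ μ : ℝ, v ⬝ᵥ v = 1 ∧ μ ∈ Set.Icc (0 : ℝ) 1 ∧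
      (∀ u : Fin n → ℝ, u ⬝ᵥ u = 1 →
        max (fairLoss A v) (fairLoss B v) ≤ max (fairLoss A u) (fairLoss B u)) ∧
      (∀ t ∈ Set.Icc (0 : ℝ) 1, gdual A B t ≤ gdual A B μ) ∧
      max (fairLoss A v) (fairLoss B v) = gdual A B μ := by
  obtain ⟨z, hz, -⟩ := hsimple 0 ⟨le_rfl, zero_le_one⟩
  have : NeZero n := ⟨by rintro rfl; exact hz (Subsingleton.elim _ _)⟩
  obtain ⟨μ, hμ, hμmax⟩ := isCompact_Icc.exists_isMaxOn (nonempty_Icc.2 zero_le_one)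
    (continuous_gdual A B).continuousOn
  obtain ⟨w, hw⟩ := exists_isUnitTopEigenvector (isHermitian_Cmat A B μ)
  obtain ⟨w₀, -, -, hw₀⟩ := hsimple μ hμ
  have hw_simple : ∀ u, IsUnitTopEigenvector (Cmat A B μ) u → u = w ∨ u = -w :=
    fun u hu => hu.eq_or_eq_neg hw hw₀
  have hmax : max (fairLoss A w) (fairLoss B w) = gdual A B μ := by
    rw [hw.gdual_eq]
    exact max_eq_mul_add_one_sub_mul hμ (hμmax.fairLoss_le_of_lt_one hμ.1 · hw_simple)
      (hμmax.fairLoss_le_of_pos · hμ.2 hw_simple)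
  exact ⟨w, μ, hw.1, hμ, fun u hu => hmax ▸ gdual_le_max_fairLoss A B hμ hu,
    fun t ht => hμmax ht, hmax⟩
end

section
/- Tightness of the SDP relaxation for two groups: let k = 2 with group matrices A ∈ ℝ^{a×n} and B ∈ ℝ^{b×n}, and assume that for every μ ∈ [0,1] the largest eigenvalue of C(μ) = μ AᵀA + (1−μ) BᵀB is simple. Then the SDP value p_SDP = inf over real symmetric positive semidefinite X with Tr(X) ≤ 1 of max(s_1 − Tr(AᵀA X), s_2 − Tr(BᵀB X)) equals min over unit vectors v of max(h_A(v), h_B(v)); in particular, the SDP optimum is attained at a rank-one matrix X = v vᵀ for some unit vector v. -/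
open Matrix

/-- The SDP objective for two groups: `X ↦ max(s₁ − Tr(AᵀA X), s₂ − Tr(BᵀB X))`. -/
noncomputable def sdpObj {a b n : ℕ} (A : Matrix (Fin a) (Fin n) ℝ)
    (B : Matrix (Fin b) (Fin n) ℝ) (X : Matrix (Fin n) (Fin n) ℝ) : ℝ :=
  max (lamMax (Aᵀ * A) - (Aᵀ * A * X).trace) (lamMax (Bᵀ * B) - (Bᵀ * B * X).trace)

/-!
Weak duality: for `μ ∈ [0,1]` and feasible `X`, the SDP objective is at least the convex
combination `μ (s₁ - Tr(AᵀA X)) + (1 - μ) (s₂ - Tr(BᵀB X))`, hence at least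
`g(μ) = μ s₁ + (1 - μ) s₂ - λmax(C(μ))`. Take `μ` maximising `g` on `[0,1]` and `v` a unit top
eigenvector of `C(μ)`. Because `λmax(C(μ))` is simple, the one-sided derivatives of
`λmax(C(·))` at `μ` are `vᵀ(AᵀA - BᵀB)v`, so optimality of `μ` gives `h_A(v) ≤ h_B(v)` if `μ < 1`
and `h_B(v) ≤ h_A(v)` if `μ > 0`. Hence `max(h_A(v), h_B(v)) = μ h_A(v) + (1 - μ) h_B(v) = g(μ)`,
and `v vᵀ` attains the dual bound.
-/

namespace FairPCA

variable {n : ℕ}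

def unitSphere (n : ℕ) : Set (Fin n → ℝ) := {u | u ⬝ᵥ u = 1}

@[simp]
lemma mem_unitSphere {u : Fin n → ℝ} : u ∈ unitSphere n ↔ u ⬝ᵥ u = 1 := Iff.rfl

lemma isCompact_unitSphere : IsCompact (unitSphere n) := by
  refine (isCompact_closedBall (0 : Fin n → ℝ) 1).of_isClosed_subset
    (isClosed_eq (by fun_prop) continuous_const) fun u hu => ?_
  rw [mem_unitSphere] at hu
  rw [Metric.mem_closedBall, dist_zero_right, pi_norm_le_iff_of_nonneg zero_le_one]
  intro i
  have hi : u i * u i ≤ 1 :=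
    hu ▸ Finset.single_le_sum (f := fun j => u j * u j) (fun j _ => mul_self_nonneg (u j))
      (Finset.mem_univ i)
  rw [Real.norm_eq_abs, abs_le]
  constructor <;> nlinarith

lemma dotProduct_self_nonneg (u : Fin n → ℝ) : 0 ≤ u ⬝ᵥ u := by
  simpa using dotProduct_star_self_nonneg u

lemma exists_smul_mem_unitSphere {w : Fin n → ℝ} (hw : w ≠ 0) :
    ∃ c : ℝ, c ≠ 0 ∧ c • w ∈ unitSphere n := by
  have hpos : 0 < w ⬝ᵥ w :=
    (dotProduct_self_nonneg w).lt_of_ne (Ne.symm (dotProduct_self_eq_zero.not.mpr hw))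
  refine ⟨(√(w ⬝ᵥ w))⁻¹, by positivity, ?_⟩
  rw [mem_unitSphere, smul_dotProduct, dotProduct_smul, smul_eq_mul, smul_eq_mul, ← mul_assoc,
    ← sq, inv_pow, Real.sq_sqrt hpos.le, inv_mul_cancel₀ hpos.ne']

lemma lamMax_eq_sSup_image (M : Matrix (Fin n) (Fin n) ℝ) :
    lamMax M = sSup ((fun u => u ⬝ᵥ M *ᵥ u) '' unitSphere n) := by
  refine congrArg sSup (Set.ext fun r => ?_)
  simp [eq_comm]

lemma bddAbove_quadForm_image (M : Matrix (Fin n) (Fin n) ℝ) :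
    BddAbove ((fun u => u ⬝ᵥ M *ᵥ u) '' unitSphere n) :=
  (isCompact_unitSphere.image (by fun_prop)).bddAbove

lemma quadForm_le_lamMax (M : Matrix (Fin n) (Fin n) ℝ) {u : Fin n → ℝ}
    (hu : u ∈ unitSphere n) : u ⬝ᵥ M *ᵥ u ≤ lamMax M := by
  rw [lamMax_eq_sSup_image]
  exact le_csSup (bddAbove_quadForm_image M) ⟨u, hu, rfl⟩

lemma exists_quadForm_eq_lamMax (hn : 0 < n) (M : Matrix (Fin n) (Fin n) ℝ) :
    ∃ u ∈ unitSphere n, u ⬝ᵥ M *ᵥ u = lamMax M := by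
  have hne : (unitSphere n).Nonempty := ⟨Pi.single ⟨0, hn⟩ 1, by simp⟩
  rw [lamMax_eq_sSup_image]
  exact (isCompact_unitSphere.image (by fun_prop)).sSup_mem (hne.image _)

lemma quadForm_le_lamMax_mul (M : Matrix (Fin n) (Fin n) ℝ) (u : Fin n → ℝ) :
    u ⬝ᵥ M *ᵥ u ≤ lamMax M * (u ⬝ᵥ u) := by
  rcases eq_or_ne u 0 with rfl | hu
  · simp
  obtain ⟨c, hc, hcu⟩ := exists_smul_mem_unitSphere hu
  have h := quadForm_le_lamMax M hcu
  rw [mem_unitSphere] at hcu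
  simp only [mulVec_smul, smul_dotProduct, dotProduct_smul, smul_eq_mul] at h hcu
  calc u ⬝ᵥ M *ᵥ u = c * (c * u ⬝ᵥ M *ᵥ u) * (u ⬝ᵥ u) := by
        linear_combination (u ⬝ᵥ M *ᵥ u) * hcu.symm
    _ ≤ lamMax M * (u ⬝ᵥ u) := mul_le_mul_of_nonneg_right h (dotProduct_self_nonneg u)

lemma lamMax_nonneg {M : Matrix (Fin n) (Fin n) ℝ} (hM : M.PosSemidef) : 0 ≤ lamMax M :=
  Real.sSup_nonneg fun _ ⟨u, _, hr⟩ => hr ▸ hM.dotProduct_mulVec_nonneg u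

lemma _root_.Continuous.lamMax {X : Type*} [TopologicalSpace X]
    {f : X → Matrix (Fin n) (Fin n) ℝ} (hf : Continuous f) : Continuous fun x => lamMax (f x) := by
  simp_rw [lamMax_eq_sSup_image]
  exact isCompact_unitSphere.continuous_sSup (f := fun x u => u ⬝ᵥ f x *ᵥ u) (by fun_prop)

lemma _root_.Matrix.IsSymm.dotProduct_mulVec_comm {M : Matrix (Fin n) (Fin n) ℝ} (hM : M.IsSymm)
    (x y : Fin n → ℝ) : x ⬝ᵥ M *ᵥ y = y ⬝ᵥ M *ᵥ x := by
  conv_lhs => rw [dotProduct_mulVec, ← hM.eq, vecMul_transpose]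
  exact dotProduct_comm _ _

lemma mulVec_eq_lamMax_smul_of_quadForm_eq {M : Matrix (Fin n) (Fin n) ℝ} (hM : M.IsSymm)
    {v : Fin n → ℝ} (hv : v ∈ unitSphere n) (hmax : v ⬝ᵥ M *ᵥ v = lamMax M) :
    M *ᵥ v = lamMax M • v := by
  rw [mem_unitSphere] at hv
  set r := M *ᵥ v - lamMax M • v
  have hr : r ⬝ᵥ M *ᵥ v - lamMax M * (r ⬝ᵥ v) = r ⬝ᵥ r := by
    simp only [r, dotProduct_sub, dotProduct_smul, smul_eq_mul]
  -- `t ↦ λ‖v + t r‖² - (v + t r)ᵀ M (v + t r)` is nonnegative and vanishes at `0`,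
  -- where its slope is `-2 ‖r‖²`.
  have hquad : ∀ t : ℝ, 0 ≤ (lamMax M * (r ⬝ᵥ r) - r ⬝ᵥ M *ᵥ r) * (t * t)
      + (-2 * (r ⬝ᵥ r)) * t + 0 := by
    intro t
    have h := quadForm_le_lamMax_mul M (v + t • r)
    simp only [mulVec_add, mulVec_smul, dotProduct_add, add_dotProduct, dotProduct_smul,
      smul_dotProduct, smul_eq_mul, hM.dotProduct_mulVec_comm v r, dotProduct_comm v r, hv,
      hmax] at h
    linear_combination h - 2 * t * hr
  have hdisc := discrim_le_zero hquad
  rw [discrim] at hdisc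
  have hrr : r ⬝ᵥ r = 0 := by nlinarith [dotProduct_self_nonneg r]
  exact sub_eq_zero.mp (dotProduct_self_eq_zero.mp hrr)

lemma exists_unit_simple_top_eigenvector {M : Matrix (Fin n) (Fin n) ℝ} {w : Fin n → ℝ} (hw : w ≠ 0)
    (heig : M *ᵥ w = lamMax M • w)
    (huniq : ∀ u : Fin n → ℝ, M *ᵥ u = lamMax M • u → ∃ c : ℝ, u = c • w) :
    ∃ v ∈ unitSphere n, v ⬝ᵥ M *ᵥ v = lamMax M ∧
      ∀ u : Fin n → ℝ, M *ᵥ u = lamMax M • u → ∃ c : ℝ, u = c • v := by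
  obtain ⟨c, hc, hcw⟩ := exists_smul_mem_unitSphere hw
  refine ⟨c • w, hcw, ?_, fun u hu => ?_⟩
  · rw [mem_unitSphere] at hcw
    rw [mulVec_smul, heig, smul_comm, dotProduct_smul, hcw, smul_eq_mul, mul_one]
  · obtain ⟨d, rfl⟩ := huniq u hu
    exact ⟨d / c, by rw [smul_smul, div_mul_cancel₀ d hc]⟩

lemma trace_mul_vecMulVec_self (M : Matrix (Fin n) (Fin n) ℝ) (v : Fin n → ℝ) :
    (M * vecMulVec v v).trace = v ⬝ᵥ M *ᵥ v := by
  rw [mul_vecMulVec, trace_vecMulVec, dotProduct_comm]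

lemma trace_mul_le_lamMax_mul_trace (M : Matrix (Fin n) (Fin n) ℝ)
    {X : Matrix (Fin n) (Fin n) ℝ} (hX : X.PosSemidef) :
    (M * X).trace ≤ lamMax M * X.trace := by
  obtain ⟨m, v, rfl⟩ := posSemidef_iff_eq_sum_vecMulVec.mp hX
  simp only [star_trivial, trace_sum, trace_mul_vecMulVec_self, trace_vecMulVec,
    Finset.mul_sum]
  exact Finset.sum_le_sum fun i _ => quadForm_le_lamMax_mul M (v i)

lemma le_of_forall_Ioc_le_add_mul {a b δ K : ℝ} (hδ : 0 < δ)
    (h : ∀ ε ∈ Set.Ioc 0 δ, a ≤ b + ε * K) : a ≤ b := by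
  refine ge_of_tendsto (x := nhdsWithin 0 (Set.Ioi 0)) (f := fun ε => b + ε * K) ?_ ?_
  · exact ((by fun_prop : Continuous fun ε : ℝ => b + ε * K).tendsto' 0 b (by simp)).mono_left
      nhdsWithin_le_nhds
  · filter_upwards [Ioc_mem_nhdsGT hδ] using h

/-- Unit top eigenvectors of `M + ε • D` lie in the compact set `S = {u | c ≤ uᵀ D u}` and their
`M`-Rayleigh quotients tend to `λmax M`; so the maximum of `uᵀ M u` on `S` is attained at a top
eigenvector of `M`, which by simplicity is `± v`. -/
theorem le_quadForm_of_lamMax_add_smul_ge {M D : Matrix (Fin n) (Fin n) ℝ} (hM : M.IsSymm)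
    {v : Fin n → ℝ} (hv : v ∈ unitSphere n)
    (hsimple : ∀ u : Fin n → ℝ, M *ᵥ u = lamMax M • u → ∃ k : ℝ, u = k • v) {δ c : ℝ}
    (hδ : 0 < δ) (hgrow : ∀ ε ∈ Set.Ioc 0 δ, lamMax M + ε * c ≤ lamMax (M + ε • D)) :
    c ≤ v ⬝ᵥ D *ᵥ v := by
  have hn : 0 < n := Nat.pos_of_ne_zero fun h => by subst h; simp at hv
  set S := {u ∈ unitSphere n | c ≤ u ⬝ᵥ D *ᵥ u}
  have hperturbed : ∀ ε ∈ Set.Ioc 0 δ,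
      ∃ u ∈ S, lamMax M - ε * (lamMax D - c) ≤ u ⬝ᵥ M *ᵥ u := by
    intro ε hε
    obtain ⟨u, hu, hqu⟩ := exists_quadForm_eq_lamMax hn (M + ε • D)
    have hgrow' := hgrow ε hε
    rw [← hqu, add_mulVec, smul_mulVec, dotProduct_add, dotProduct_smul, smul_eq_mul] at hgrow'
    have hM' := quadForm_le_lamMax M hu
    have hD' := quadForm_le_lamMax D hu
    have hcu : c ≤ u ⬝ᵥ D *ᵥ u := le_of_mul_le_mul_left (by linarith) hε.1
    exact ⟨u, ⟨hu, hcu⟩, by nlinarith [hε.1]⟩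
  have hS : IsCompact S :=
    isCompact_unitSphere.inter_right (isClosed_le continuous_const
      (by fun_prop : Continuous fun u : Fin n → ℝ => u ⬝ᵥ D *ᵥ u))
  obtain ⟨u₀, hu₀S, hu₀max⟩ := hS.exists_isMaxOn
    (by obtain ⟨u, hu, -⟩ := hperturbed δ ⟨hδ, le_rfl⟩; exact ⟨u, hu⟩)
    (by fun_prop : Continuous fun u => u ⬝ᵥ M *ᵥ u).continuousOn
  have hge : lamMax M ≤ u₀ ⬝ᵥ M *ᵥ u₀ :=
    le_of_forall_Ioc_le_add_mul (K := lamMax D - c) hδ fun ε hε => by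
      obtain ⟨u, hu, hle⟩ := hperturbed ε hε
      linarith [show u ⬝ᵥ M *ᵥ u ≤ u₀ ⬝ᵥ M *ᵥ u₀ from hu₀max hu]
  have hu₀ := le_antisymm (quadForm_le_lamMax M hu₀S.1) hge
  obtain ⟨k, rfl⟩ := hsimple u₀ (mulVec_eq_lamMax_smul_of_quadForm_eq hM hu₀S.1 hu₀)
  have hunit := hu₀S.1
  have hc := hu₀S.2
  rw [mem_unitSphere] at hv hunit
  simp only [mulVec_smul, smul_dotProduct, dotProduct_smul, smul_eq_mul, hv, mul_one] at hunit hc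
  rwa [← mul_assoc, hunit, one_mul] at hc

lemma max_le_convex_combo {x y μ : ℝ} (hμ : μ ∈ Set.Icc (0 : ℝ) 1) (hright : μ < 1 → x ≤ y)
    (hleft : 0 < μ → y ≤ x) : max x y ≤ μ * x + (1 - μ) * y := by
  rcases hμ.1.eq_or_lt with rfl | h0
  · simp [hright zero_lt_one]
  rcases hμ.2.eq_or_lt with rfl | h1
  · simp [hleft zero_lt_one]
  obtain rfl := le_antisymm (hright h1) (hleft h0)
  rw [max_self]; linarith

variable (P Q : Matrix (Fin n) (Fin n) ℝ)

def pencil (t : ℝ) : Matrix (Fin n) (Fin n) ℝ := t • P + (1 - t) • Q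

/-- The Lagrange dual function of the SDP `min_X max(λmax P - Tr(P X), λmax Q - Tr(Q X))`. -/
noncomputable def dualFun (t : ℝ) : ℝ := t * lamMax P + (1 - t) * lamMax Q - lamMax (pencil P Q t)

lemma pencil_add (t s : ℝ) : pencil P Q (t + s) = pencil P Q t + s • (P - Q) := by
  simp only [pencil]; module

lemma pencil_sub (t s : ℝ) : pencil P Q (t - s) = pencil P Q t + s • (Q - P) := by
  simp only [pencil]; module

lemma quadForm_pencil (t : ℝ) (u : Fin n → ℝ) :
    u ⬝ᵥ pencil P Q t *ᵥ u = t * (u ⬝ᵥ P *ᵥ u) + (1 - t) * (u ⬝ᵥ Q *ᵥ u) := by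
  simp only [pencil, add_mulVec, smul_mulVec, dotProduct_add, dotProduct_smul, smul_eq_mul]

variable {P Q}

lemma isSymm_pencil (hP : P.IsSymm) (hQ : Q.IsSymm) (t : ℝ) : (pencil P Q t).IsSymm :=
  (hP.smul t).add (hQ.smul (1 - t))

lemma posSemidef_pencil (hP : P.PosSemidef) (hQ : Q.PosSemidef) {t : ℝ}
    (ht : t ∈ Set.Icc (0 : ℝ) 1) : (pencil P Q t).PosSemidef :=
  (hP.smul ht.1).add (hQ.smul (sub_nonneg.mpr ht.2))

lemma continuous_dualFun : Continuous (dualFun P Q) := by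
  unfold dualFun pencil
  have : Continuous fun t : ℝ => lamMax (t • P + (1 - t) • Q) := Continuous.lamMax (by fun_prop)
  fun_prop

theorem dualFun_le_max_sub_trace (hP : P.PosSemidef) (hQ : Q.PosSemidef) {t : ℝ}
    (ht : t ∈ Set.Icc (0 : ℝ) 1) {X : Matrix (Fin n) (Fin n) ℝ} (hX : X.PosSemidef) (htr : X.trace ≤ 1) :
    dualFun P Q t ≤ max (lamMax P - (P * X).trace) (lamMax Q - (Q * X).trace) := by
  have hbound : (pencil P Q t * X).trace ≤ lamMax (pencil P Q t) :=
    (trace_mul_le_lamMax_mul_trace _ hX).trans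
      (mul_le_of_le_one_right (lamMax_nonneg (posSemidef_pencil hP hQ ht)) htr)
  have hsplit : (pencil P Q t * X).trace = t * (P * X).trace + (1 - t) * (Q * X).trace := by
    simp only [pencil, Matrix.add_mul, Matrix.smul_mul, trace_add, trace_smul, smul_eq_mul]
  calc dualFun P Q t ≤ t * (lamMax P - (P * X).trace) + (1 - t) * (lamMax Q - (Q * X).trace) := by
        unfold dualFun; linarith
    _ ≤ _ := Convex.combo_le_max _ _ ht.1 (sub_nonneg.mpr ht.2) (by ring)

theorem exists_unit_rankOne_le_sdp (hP : P.PosSemidef) (hQ : Q.PosSemidef)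
    (hsimple : ∀ μ ∈ Set.Icc (0 : ℝ) 1, ∃ w : Fin n → ℝ, w ≠ 0 ∧
      pencil P Q μ *ᵥ w = lamMax (pencil P Q μ) • w ∧
      ∀ u : Fin n → ℝ, pencil P Q μ *ᵥ u = lamMax (pencil P Q μ) • u → ∃ c : ℝ, u = c • w) :
    ∃ v ∈ unitSphere n, ∀ X : Matrix (Fin n) (Fin n) ℝ, X.PosSemidef → X.trace ≤ 1 →
      max (lamMax P - v ⬝ᵥ P *ᵥ v) (lamMax Q - v ⬝ᵥ Q *ᵥ v) ≤
        max (lamMax P - (P * X).trace) (lamMax Q - (Q * X).trace) := by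
  obtain ⟨μ, hμ, hmax⟩ := isCompact_Icc.exists_isMaxOn (Set.nonempty_Icc.mpr zero_le_one)
    continuous_dualFun.continuousOn (f := dualFun P Q)
  obtain ⟨w, hw, heig, huniq⟩ := hsimple μ hμ
  obtain ⟨v, hv, hvtop, hvuniq⟩ := exists_unit_simple_top_eigenvector hw heig huniq
  have hsymm : (pencil P Q μ).IsSymm :=
    isSymm_pencil (isHermitian_iff_isSymm.mp hP.isHermitian)
      (isHermitian_iff_isSymm.mp hQ.isHermitian) μ
  have hright : μ < 1 → lamMax P - v ⬝ᵥ P *ᵥ v ≤ lamMax Q - v ⬝ᵥ Q *ᵥ v := fun h1 => by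
    have hslope := le_quadForm_of_lamMax_add_smul_ge (D := P - Q) (c := lamMax P - lamMax Q)
      hsymm hv hvuniq (sub_pos.mpr h1) fun ε hε => by
        have hdual : dualFun P Q (μ + ε) ≤ dualFun P Q μ :=
          hmax ⟨by linarith [hε.1, hμ.1], by linarith [hε.2]⟩
        rw [← pencil_add]
        simp only [dualFun] at hdual
        linarith
    simp only [sub_mulVec, dotProduct_sub] at hslope
    linarith
  have hleft : 0 < μ → lamMax Q - v ⬝ᵥ Q *ᵥ v ≤ lamMax P - v ⬝ᵥ P *ᵥ v := fun h0 => by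
    have hslope := le_quadForm_of_lamMax_add_smul_ge (D := Q - P) (c := lamMax Q - lamMax P)
      hsymm hv hvuniq h0 fun ε hε => by
        have hdual : dualFun P Q (μ - ε) ≤ dualFun P Q μ :=
          hmax ⟨by linarith [hε.2], by linarith [hε.1, hμ.2]⟩
        rw [← pencil_sub]
        simp only [dualFun] at hdual
        linarith
    simp only [sub_mulVec, dotProduct_sub] at hslope
    linarith
  refine ⟨v, hv, fun X hX htr => ?_⟩
  calc _ ≤ μ * (lamMax P - v ⬝ᵥ P *ᵥ v) + (1 - μ) * (lamMax Q - v ⬝ᵥ Q *ᵥ v) :=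
        max_le_convex_combo hμ hright hleft
    _ = dualFun P Q μ := by rw [dualFun, ← hvtop, quadForm_pencil]; ring
    _ ≤ _ := dualFun_le_max_sub_trace hP hQ hμ hX htr

end FairPCA

open FairPCA

/-- tightness of the SDP relaxation for two groups: assuming the
largest eigenvalue of `C(μ)` is simple for every `μ ∈ [0,1]`, the SDP value over
PSD matrices `X` with `Tr(X) ≤ 1` equals the minimum over unit vectors `v` of
`max(h_A(v), h_B(v))`, and the SDP optimum is attained at the rank-one matrix
`X = v vᵀ` for a unit vector `v` minimizing the primal. -/
theorem stmt12 {a b n : ℕ} (A : Matrix (Fin a) (Fin n) ℝ) (B : Matrix (Fin b) (Fin n) ℝ)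
    (hsimple : ∀ μ ∈ Set.Icc (0 : ℝ) 1, ∃ w : Fin n → ℝ, w ≠ 0 ∧
      Cmat A B μ *ᵥ w = lamMax (Cmat A B μ) • w ∧
      ∀ u : Fin n → ℝ, Cmat A B μ *ᵥ u = lamMax (Cmat A B μ) • u → ∃ c : ℝ, u = c • w) :
    ∃ v : Fin n → ℝ, v ⬝ᵥ v = 1 ∧
      (∀ u : Fin n → ℝ, u ⬝ᵥ u = 1 →
        max (fairLoss A v) (fairLoss B v) ≤ max (fairLoss A u) (fairLoss B u)) ∧
      IsLeast {r : ℝ | ∃ X : Matrix (Fin n) (Fin n) ℝ, X.PosSemidef ∧ X.trace ≤ 1 ∧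
          r = sdpObj A B X}
        (sdpObj A B (Matrix.vecMulVec v v)) ∧
      sdpObj A B (Matrix.vecMulVec v v) = max (fairLoss A v) (fairLoss B v) := by
  have hgram : ∀ {m : ℕ} (M : Matrix (Fin m) (Fin n) ℝ), (Mᵀ * M).PosSemidef := fun M => by
    simpa using posSemidef_conjTranspose_mul_self M
  obtain ⟨v, hv, hopt⟩ := exists_unit_rankOne_le_sdp (hgram A) (hgram B) hsimple
  have hrankOne : ∀ u, sdpObj A B (vecMulVec u u) = max (fairLoss A u) (fairLoss B u) :=
    fun u => by simp only [sdpObj, fairLoss, trace_mul_vecMulVec_self]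
  have hfeasible : ∀ u ∈ unitSphere n,
      (vecMulVec u u).PosSemidef ∧ (vecMulVec u u).trace ≤ 1 := fun u hu =>
    ⟨by simpa using posSemidef_vecMulVec_self_star u, by rw [trace_vecMulVec, hu]⟩
  refine ⟨v, hv, fun u hu => ?_, ⟨⟨_, (hfeasible v hv).1, (hfeasible v hv).2, rfl⟩, ?_⟩,
    hrankOne v⟩
  · rw [← hrankOne u]
    exact hopt _ (hfeasible u hu).1 (hfeasible u hu).2
  · rintro r ⟨X, hX, htr, rfl⟩
    rw [hrankOne]
    exact hopt X hX htr
end
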